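/- arXiv:1709.01540 — 2 statements merged into one kernel-verified Lean document; each statement's English description precedes it below -/
import Mathlib

section
/- Let Pr : Prop → Prop be an abstract provability predicate on a theory T satisfying the Hilbert–Bernays–Löb derivability conditions: (D1) if T proves φ then T proves Pr(φ); (D2) T proves Pr(φ → ψ) → (Pr(φ) → Pr(ψ)); (D3) T proves Pr(φ) → Pr(Pr(φ)). Then Löb's theorem holds: if T proves Pr(φ) → φ, then T proves φ. -/
/-- Löb's theorem from the Hilbert–Bernays–Löb derivability conditions.
`T : Prop → Prop` is the set of sentences provable in the theory (shallow
embedding), `Pr` the internal provability predicate.  `T` is closed under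
modus ponens and logical consequence, satisfies D1–D3, and has fixed points
for `ψ ↔ (Pr ψ → φ)`. -/
theorem lob_theorem
    (T Pr : Prop → Prop)
    (mp : ∀ p q : Prop, T (p → q) → T p → T q)
    (consCl : ∀ p q : Prop, (p → q) → T p → T q)
    (consCl2 : ∀ p q r : Prop, (p → q → r) → T p → T q → T r)
    (d1 : ∀ p : Prop, T p → T (Pr p))
    (d2 : ∀ p q : Prop, T (Pr (p → q) → (Pr p → Pr q)))
    (d3 : ∀ p : Prop, T (Pr p → Pr (Pr p)))
    (fixpt : ∀ φ : Prop, ∃ ψ : Prop, T (ψ ↔ (Pr ψ → φ)))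
    (φ : Prop) (h : T (Pr φ → φ)) :
    T φ := by
  obtain ⟨ψ, hψ⟩ := fixpt φ
  -- T (ψ → (Pr ψ → φ))
  have h1 : T (ψ → (Pr ψ → φ)) := consCl _ _ (fun e => e.mp) hψ
  -- T (Pr (ψ → (Pr ψ → φ)))
  have h2 : T (Pr (ψ → (Pr ψ → φ))) := d1 _ h1
  -- T (Pr ψ → Pr (Pr ψ → φ))
  have h3 : T (Pr ψ → Pr (Pr ψ → φ)) := mp _ _ (d2 _ _) h2
  -- T (Pr ψ → Pr (Pr ψ) → Pr φ)
  have h4 : T (Pr ψ → Pr (Pr ψ) → Pr φ) :=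
    consCl2 _ _ _ (fun a b x => b (a x)) h3 (d2 (Pr ψ) φ)
  -- T (Pr ψ → Pr φ)
  have h5 : T (Pr ψ → Pr φ) :=
    consCl2 _ _ _ (fun a b x => a x (b x)) h4 (d3 ψ)
  -- T (Pr ψ → φ)
  have h6 : T (Pr ψ → φ) :=
    consCl2 _ _ _ (fun a b x => b (a x)) h5 h
  -- T ψ
  have h7 : T ψ := consCl2 _ _ _ (fun e x => e.mpr x) hψ h6
  exact mp _ _ h6 (d1 _ h7)
end

section
/- Internal formalization step of the main theorem: in T, from Pr(∀n ∃α_n<α, Box_{α_n}(⋁Γ ∨ φ(ṅ))), the formalized Π₁-reflection lemma (T proves, and hence Pr of: Con_γ ∧ Box_γ(ψ) → ψ for Π₁ ψ), and monotonicity (for α_n < α the hypothesis ∀γ<α, Con_γ suffices), one derives Pr((∀γ<α, Con_γ) → ∀n (⋁Γ ∨ φ(n))), and hence, when ∀n φ(n) ∈ Γ, Pr((∀γ<α, Con_γ) → ⋁Γ), i.e., Box_α(⋁Γ). -/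
/-- The disjunction `⋁Γ` of a sequent. -/
def bigOr (Γ : List Prop) : Prop := Γ.foldr Or False

lemma bigOr_of_mem {Γ : List Prop} {p : Prop} (h : p ∈ Γ) (hp : p) : bigOr Γ := by
  induction Γ with
  | nil => simp at h
  | cons q Γ ih =>
    rcases List.mem_cons.mp h with rfl | h'
    · exact Or.inl hp
    · exact Or.inr (ih h')

/-- Internal formalization step of the main theorem: in `T`, from
`Pr (∀ n, ∃ α_n < α, Box_{α_n} (⋁Γ ∨ φ ṅ))`, the formalized Π₁-reflection
lemma (under `Pr`), and monotonicity of iterated consistency in the index,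
one derives `Pr ((∀ γ < α, Con γ) → ∀ n, ⋁Γ ∨ φ n)`; hence, since
`∀ n, φ n ∈ Γ`, also `Pr ((∀ γ < α, Con γ) → ⋁Γ)`, i.e. `Box α (⋁Γ)`. -/
theorem internal_omega_rule_step
    (Λ : Type) [LinearOrder Λ]
    (T Pr : Prop → Prop)
    (mp : ∀ p q : Prop, T (p → q) → T p → T q)
    (consCl : ∀ p q : Prop, (p → q) → T p → T q)
    (prK : ∀ p q : Prop, T (p → q) → T (Pr p → Pr q))
    (d1 : ∀ p : Prop, T p → T (Pr p))
    (d2 : ∀ p q : Prop, T (Pr (p → q) → (Pr p → Pr q)))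
    (d3 : ∀ p : Prop, T (Pr p → Pr (Pr p)))
    (Box : Λ → Prop → Prop)
    (fixBox : ∀ (α : Λ) (ψ : Prop),
      T (Box α ψ ↔ Pr ((∀ γ : Λ, γ < α → ¬ Box γ False) → ψ)))
    (Pi1 Delta0 : Prop → Prop)
    (α : Λ) (Γ : List Prop) (φ : ℕ → Prop)
    (hmem : (∀ n : ℕ, φ n) ∈ Γ)
    (hGamma : ∀ p ∈ Γ, Pi1 p)
    (hphi : ∀ n : ℕ, Delta0 (φ n))
    (hDelta0Pi1 : ∀ p : Prop, Delta0 p → Pi1 p)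
    -- hypothesis obtained from the ω-rule case and the reflexive IH:
    (h1 : T (Pr (∀ n : ℕ, ∃ β : Λ, β < α ∧ Box β (bigOr Γ ∨ φ n))))
    -- formalized Π₁-reflection lemma, under Pr:
    (hrefl : T (Pr (∀ (β : Λ) (n : ℕ),
      (¬ Box β False ∧ Box β (bigOr Γ ∨ φ n)) → (bigOr Γ ∨ φ n))))
    -- monotonicity of iterated consistency in the index, under Pr:
    (hmono : T (Pr (∀ β γ : Λ, γ < β →
      (¬ Box β False → ¬ Box γ False)))) :
    T (Pr ((∀ γ : Λ, γ < α → ¬ Box γ False) → ∀ n : ℕ, bigOr Γ ∨ φ n)) ∧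
      T (Pr ((∀ γ : Λ, γ < α → ¬ Box γ False) → bigOr Γ)) ∧
      T (Box α (bigOr Γ)) := by
  -- T is closed under (meta-)true propositions, since T is nonempty
  have hT : ∀ q : Prop, q → T q := fun q hq => consCl _ _ (fun _ => hq) h1
  set P1 : Prop := (∀ n : ℕ, ∃ β : Λ, β < α ∧ Box β (bigOr Γ ∨ φ n)) with hP1
  set P2 : Prop := (∀ (β : Λ) (n : ℕ),
      (¬ Box β False ∧ Box β (bigOr Γ ∨ φ n)) → (bigOr Γ ∨ φ n)) with hP2
  -- Pr (P1 ∧ P2)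
  have hand : T (Pr (P1 ∧ P2)) := by
    have t1 : T (P1 → (P2 → P1 ∧ P2)) := hT _ (fun a b => ⟨a, b⟩)
    have t2 : T (Pr P1 → Pr (P2 → P1 ∧ P2)) := prK _ _ t1
    have t3 : T (Pr (P2 → P1 ∧ P2)) := mp _ _ t2 h1
    have t4 := d2 P2 (P1 ∧ P2)
    exact mp _ _ (mp _ _ t4 t3) hrefl
  -- the key logical implication
  have key : (P1 ∧ P2) →
      ((∀ γ : Λ, γ < α → ¬ Box γ False) → ∀ n : ℕ, bigOr Γ ∨ φ n) := by
    rintro ⟨hp1, hp2⟩ hcon n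
    obtain ⟨β, hβ, hbox⟩ := hp1 n
    exact hp2 β n ⟨hcon β hβ, hbox⟩
  have first : T (Pr ((∀ γ : Λ, γ < α → ¬ Box γ False) → ∀ n : ℕ, bigOr Γ ∨ φ n)) := by
    exact mp _ _ (prK _ _ (hT _ key)) hand
  have step2 : ((∀ γ : Λ, γ < α → ¬ Box γ False) → ∀ n : ℕ, bigOr Γ ∨ φ n) →
      ((∀ γ : Λ, γ < α → ¬ Box γ False) → bigOr Γ) := by
    intro h hcon
    by_cases hd : bigOr Γ
    · exact hd
    · refine bigOr_of_mem hmem (fun n => ?_)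
      rcases h hcon n with h' | h'
      · exact absurd h' hd
      · exact h'
  have second : T (Pr ((∀ γ : Λ, γ < α → ¬ Box γ False) → bigOr Γ)) :=
    mp _ _ (prK _ _ (hT _ step2)) first
  have third : T (Box α (bigOr Γ)) := by
    have hiff := fixBox α (bigOr Γ)
    have t : T ((Box α (bigOr Γ) ↔ Pr ((∀ γ : Λ, γ < α → ¬ Box γ False) → bigOr Γ)) →
        (Pr ((∀ γ : Λ, γ < α → ¬ Box γ False) → bigOr Γ) → Box α (bigOr Γ))) :=
      hT _ (fun i => i.mpr)
    exact mp _ _ (mp _ _ t hiff) second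
  exact ⟨first, second, third⟩
end
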